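/- Let $f:\{0,1\}^n\to\{0,1\}$ be balanced and $f_0$ a dictatorship function, $0<p<1/2$. If $N^{\mathsf{sym}}_\alpha(f) \leq N^{\mathsf{sym}}_\alpha(f_0)$ for all $\alpha\in[1,2]$, then $I(f(Y);X)\leq 1-h(p)$, where $h$ is the binary entropy function. -/

import Mathlib

open Finset Real Filter

/-- The noise operator `T_p` applied to a Boolean function on the Hamming cube. -/
noncomputable def Tp (n : ℕ) (p : ℝ) (f : (Fin n → Bool) → Bool) (x : Fin n → Bool) : ℝ :=
  ∑ y : Fin n → Bool,
    p ^ hammingDist x y * (1 - p) ^ (n - hammingDist x y) * (if f y then 1 else 0)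

/-- A Boolean function is balanced if it takes the value 1 exactly half the time. -/
def IsBalanced (n : ℕ) (f : (Fin n → Bool) → Bool) : Prop :=
  ∑ y : Fin n → Bool, (if f y then (1 : ℝ) else 0) = 2 ^ n / 2

/-- Dictatorship function on coordinate `i`. -/
def dict (n : ℕ) (i : Fin n) : (Fin n → Bool) → Bool := fun y => y i

/-- `N_α(f) = ∑_x (T_p f x)^α` (real power). -/
noncomputable def Nal (n : ℕ) (p : ℝ) (f : (Fin n → Bool) → Bool) (α : ℝ) : ℝ :=
  ∑ x : Fin n → Bool, Tp n p f x ^ α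

/-- Symmetrized version `N^sym_α(f) = ∑_x (T_p f x)^α + (1 - T_p f x)^α`. -/
noncomputable def Nsym (n : ℕ) (p : ℝ) (f : (Fin n → Bool) → Bool) (α : ℝ) : ℝ :=
  ∑ x : Fin n → Bool, (Tp n p f x ^ α + (1 - Tp n p f x) ^ α)

/-- Binary entropy function, in bits. -/
noncomputable def binEnt (t : ℝ) : ℝ := -(t * Real.logb 2 t) - (1 - t) * Real.logb 2 (1 - t)

/-- Mutual information `I(f(Y); X)` for a balanced Boolean function `f`,
with `X` uniform on the cube and `Y` the output of a BSC(p) on input `X`. -/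
noncomputable def MI (n : ℕ) (p : ℝ) (f : (Fin n → Bool) → Bool) : ℝ :=
  1 - ((2 : ℝ) ^ n)⁻¹ * ∑ x : Fin n → Bool, binEnt (Tp n p f x)

open Topology

/-!
At `α = 1` both sides of the symmetrized Li–Médard inequality equal `2 ^ n`, since
`t + (1 - t) = 1`. The inequality on `[1, 2]` therefore forces the right derivatives at
`α = 1` to compare in the same direction, and `d/dα (t ^ α + (1 - t) ^ α)` at `α = 1` is
`-log 2 · h(t)`. This gives `∑ₓ h(T_p f x) ≥ ∑ₓ h(T_p f₀ x) = 2 ^ n h(p)`, which is the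
Courtade–Kumar bound.
-/

section NoiseOperator

variable {n : ℕ} {p : ℝ}

lemma pow_hammingDist_mul_eq_prod (x y : Fin n → Bool) :
    p ^ hammingDist x y * (1 - p) ^ (n - hammingDist x y)
      = ∏ j, if x j = y j then 1 - p else p := by
  have hcard : #{j | x j = y j} + hammingDist x y = n := by
    rw [hammingDist, Finset.card_filter_add_card_filter_not, card_univ, Fintype.card_fin]
  rw [prod_ite, prod_const, prod_const, mul_comm]
  congr 2
  omega

lemma sum_pow_hammingDist_mul_prod (x : Fin n → Bool) (g : Fin n → Bool → ℝ) :
    ∑ y : Fin n → Bool, p ^ hammingDist x y * (1 - p) ^ (n - hammingDist x y) * ∏ j, g j (y j)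
      = ∏ j, ((1 - p) * g j (x j) + p * g j (!x j)) := by
  simp only [pow_hammingDist_mul_eq_prod, ← prod_mul_distrib]
  rw [← Fintype.prod_sum (κ := fun _ => Bool)
    (fun j b => (if x j = b then 1 - p else p) * g j b)]
  refine prod_congr rfl fun j _ => ?_
  cases x j <;> simp [add_comm]

lemma sum_pow_hammingDist (x : Fin n → Bool) :
    ∑ y : Fin n → Bool, p ^ hammingDist x y * (1 - p) ^ (n - hammingDist x y) = 1 := by
  simpa using sum_pow_hammingDist_mul_prod (p := p) x fun _ _ => 1

lemma Tp_dict (i : Fin n) (x : Fin n → Bool) :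
    Tp n p (dict n i) x = if x i then 1 - p else p := by
  have h := sum_pow_hammingDist_mul_prod (p := p) x
    fun j b => if j = i then (if b then 1 else 0) else 1
  simp only [prod_ite_eq', mem_univ, if_true] at h
  refine (h : Tp n p (dict n i) x = _).trans ?_
  rw [prod_eq_single i (fun j _ hj => by simp [hj]) (by simp)]
  cases x i <;> simp

lemma Tp_nonneg (hp : 0 ≤ p) (hp1 : p ≤ 1) (f : (Fin n → Bool) → Bool) (x : Fin n → Bool) : 0 ≤ Tp n p f x := by
  have : 0 ≤ 1 - p := sub_nonneg.2 hp1
  unfold Tp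
  positivity

lemma Tp_le_one (hp : 0 ≤ p) (hp1 : p ≤ 1) (f : (Fin n → Bool) → Bool) (x : Fin n → Bool) : Tp n p f x ≤ 1 := by
  have : 0 ≤ 1 - p := sub_nonneg.2 hp1
  rw [← sum_pow_hammingDist (p := p) x]
  refine sum_le_sum fun y _ => mul_le_of_le_one_right (by positivity) ?_
  split_ifs <;> norm_num

end NoiseOperator

lemma hasDerivAt_const_rpow_of_nonneg {a x : ℝ} (ha : 0 ≤ a) (hx : x ≠ 0) :
    HasDerivAt (fun y => a ^ y) (a ^ x * log a) x := by
  rcases ha.eq_or_lt with rfl | ha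
  · have hzero : (fun y : ℝ => (0 : ℝ) ^ y) =ᶠ[𝓝 x] fun _ => 0 := by
      filter_upwards [isOpen_ne.mem_nhds hx] with y hy using zero_rpow hy
    simpa using (hasDerivAt_const x (0 : ℝ)).congr_of_eventuallyEq hzero
  · exact (hasStrictDerivAt_const_rpow ha x).hasDerivAt

lemma HasDerivAt.le_of_eventually_le_nhdsGT {f g : ℝ → ℝ} {f' g' a : ℝ}
    (hf : HasDerivAt f f' a) (hg : HasDerivAt g g' a) (ha : f a = g a)
    (hle : ∀ᶠ x in 𝓝[>] a, f x ≤ g x) : f' ≤ g' := by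
  have hslope := (hasDerivAt_iff_tendsto_slope_left_right.1 (hg.sub hf)).2
  have hnonneg : ∀ᶠ x in 𝓝[>] a, 0 ≤ slope (fun y => g y - f y) a x := by
    filter_upwards [hle, self_mem_nhdsWithin] with x hx (hax : a < x)
    rw [slope_def_field, ha, sub_self, sub_zero]
    exact div_nonneg (sub_nonneg.2 hx) (sub_nonneg.2 hax.le)
  exact sub_nonneg.1 (ge_of_tendsto hslope hnonneg)

lemma mul_log_add_one_sub_mul_log (t : ℝ) :
    t * log t + (1 - t) * log (1 - t) = -(log 2 * binEnt t) := by
  have hlog2 : log 2 ≠ 0 := (log_pos one_lt_two).ne'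
  rw [binEnt, logb, logb]
  field_simp
  ring

lemma binEnt_one_sub (t : ℝ) : binEnt (1 - t) = binEnt t := by
  rw [binEnt, binEnt, sub_sub_cancel]
  ring

section Nsym

variable {n : ℕ} {p : ℝ}

lemma Nsym_one (f : (Fin n → Bool) → Bool) : Nsym n p f 1 = 2 ^ n := by
  simp [Nsym, rpow_one]

lemma hasDerivAt_Nsym_one (hp : 0 ≤ p) (hp1 : p ≤ 1) (f : (Fin n → Bool) → Bool) :
    HasDerivAt (Nsym n p f) (-(log 2 * ∑ x, binEnt (Tp n p f x))) 1 := by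
  rw [mul_sum, ← sum_neg_distrib]
  refine HasDerivAt.fun_sum fun x _ => ?_
  rw [← mul_log_add_one_sub_mul_log]
  simpa only [rpow_one] using
    (hasDerivAt_const_rpow_of_nonneg (Tp_nonneg hp hp1 f x) one_ne_zero).fun_add
      (hasDerivAt_const_rpow_of_nonneg (sub_nonneg.2 (Tp_le_one hp hp1 f x)) one_ne_zero)

lemma MI_le_MI_of_eventually_Nsym_le (hp : 0 ≤ p) (hp1 : p ≤ 1) {f g : (Fin n → Bool) → Bool}
    (hle : ∀ᶠ α in 𝓝[>] 1, Nsym n p f α ≤ Nsym n p g α) : MI n p f ≤ MI n p g := by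
  have hderiv := (hasDerivAt_Nsym_one hp hp1 f).le_of_eventually_le_nhdsGT
    (hasDerivAt_Nsym_one hp hp1 g) (by rw [Nsym_one, Nsym_one]) hle
  have hsum : ∑ x, binEnt (Tp n p g x) ≤ ∑ x, binEnt (Tp n p f x) :=
    le_of_mul_le_mul_left (neg_le_neg_iff.1 hderiv) (log_pos one_lt_two)
  unfold MI
  gcongr

lemma MI_dict (i : Fin n) : MI n p (dict n i) = 1 - binEnt p := by
  have hconst : ∀ x, binEnt (Tp n p (dict n i) x) = binEnt p := fun x => by
    rw [Tp_dict]
    cases x i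
    · rfl
    · exact binEnt_one_sub p
  simp [MI, hconst]

end Nsym

theorem sym_li_medard_implies_CK_general (n : ℕ) (p : ℝ) (hp : 0 < p) (hp2 : p < 1/2)
    (f : (Fin n → Bool) → Bool) (i : Fin n)
    (hLM : ∀ α ∈ Set.Icc (1 : ℝ) 2, Nsym n p f α ≤ Nsym n p (dict n i) α) :
    MI n p f ≤ 1 - binEnt p := by
  have hle : ∀ᶠ α in 𝓝[>] 1, Nsym n p f α ≤ Nsym n p (dict n i) α :=
    eventually_of_mem (Icc_mem_nhdsGT one_lt_two) hLM
  calc MI n p f ≤ MI n p (dict n i) := MI_le_MI_of_eventually_Nsym_le hp.le (by linarith) hle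
    _ = 1 - binEnt p := MI_dict i

/-- If the symmetrized Li–Médard conjecture holds for a balanced `f`
(`N^sym_α(f) ≤ N^sym_α(f_0)` for all `α ∈ [1,2]`), then the Courtade–Kumar bound
`I(f(Y);X) ≤ 1 - h(p)` holds for `f`. -/
theorem sym_li_medard_implies_CK (n : ℕ) (p : ℝ) (hp : 0 < p) (hp2 : p < 1/2)
    (f : (Fin n → Bool) → Bool) (hf : IsBalanced n f) (i : Fin n)
    (hLM : ∀ α ∈ Set.Icc (1 : ℝ) 2, Nsym n p f α ≤ Nsym n p (dict n i) α) :
    MI n p f ≤ 1 - binEnt p :=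
  sym_li_medard_implies_CK_general n p hp hp2 f i hLM
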